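/- For every deterministic online interval scheduling algorithm ALG with predictions, every real γ with 0 ≤ γ ≤ 1, and every real ε with 0 < ε < 1, there exist a finite prediction set Î_w of intervals and a finite sequence I_w of distinct intervals such that: (1) ALG(Î_w, I_w) ≤ (1 − γ(Î_w,I_w))·Opt(I_w); (2) |γ(Î_w,I_w) − γ| ≤ ε; and (3) Opt(I_w) ≥ 1/ε². Here I_w is also regarded as the set of its members and γ(Î_w,I_w) = Opt((I_w \ Î_w) ∪ (Î_w \ I_w))/Opt(I_w). Hence no deterministic interval scheduling algorithm is better than (1 − γ)-competitive. -/

import Mathlib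

open scoped Classical

/-- An interval is a pair `(a, b)` of integers; it is *valid* when `a < b`. -/
abbrev Iv := ℤ × ℤ

/-- Two intervals `(a,b)` and `(c,d)` overlap if `max a c < min b d`. -/
def Overlap (i j : Iv) : Prop := max i.1 j.1 < min i.2 j.2

instance : ∀ i j : Iv, Decidable (Overlap i j) := fun _ _ => by
  unfold Overlap; infer_instance

/-- A finite set of intervals is pairwise non-overlapping. -/
def NonOverlapping (T : Finset Iv) : Prop :=
  ∀ i ∈ T, ∀ j ∈ T, i ≠ j → ¬ Overlap i j

instance : DecidablePred NonOverlapping := fun _ => by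
  unfold NonOverlapping; infer_instance

/-- `Opt S` is the maximum cardinality of a pairwise non-overlapping subset of `S`. -/
def Opt (S : Finset Iv) : ℕ :=
  (S.powerset.filter fun T => NonOverlapping T).sup Finset.card

/-- A deterministic online interval scheduling algorithm with predictions is modelled
as a function which, given the prediction set and the sequence of requests revealed so
far (current request last), answers `true` (accept) or `false` (reject). -/
abbrev IvAlg := Finset Iv → List Iv → Bool

/-- The set of indices of requests of the sequence `I` accepted by the algorithm `A`
with prediction `Ihat`. -/
def accIdx (A : IvAlg) (Ihat : Finset Iv) (I : List Iv) : Finset ℕ :=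
  (Finset.range I.length).filter fun k => A Ihat (I.take (k + 1)) = true

/-!
Cut the line into blocks `[B j, B (j + 1)]`; intervals in different blocks never overlap, so
`Opt` of a union of blocks, and of its symmetric difference with a blockwise prediction, is the
sum over the blocks. The prediction is the first unit slot of each of `S + Y` blocks. In each of
the first `S` blocks the adversary requests the whole block; if the algorithm accepts it, the
adversary then requests the predicted slot and `k j ≥ 1` further unit slots inside it, none of
which the algorithm can take any more. In the last `Y` blocks the predicted slot is requested.
Per block, (requests accepted, `Opt` of the error, `Opt`) is `(0, 1, 1)` for a rejected long
block, `(≤ 1, k j, k j + 1)` for an accepted one and `(≤ 1, 0, 1)` for a predicted one, so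
`ALG ≤ Opt I - Opt Δ = (1 - γ') Opt I`. With `a` accepted blocks and `E = ∑ (k j - 1)`,
`γ' = (S + E) / (S + E + Y + a)`; every unit of `Y` or `E` moves this ratio by at most
`1 / S ≤ ε`, so choosing `Y` in advance and `E` after seeing `a` puts `γ'` within `ε` of `γ`.
-/

open Finset
open scoped symmDiff

theorem overlap_comm {x y : Iv} : Overlap x y ↔ Overlap y x := by
  unfold Overlap; rw [max_comm, min_comm]

theorem not_overlap_of_snd_le_fst {x y : Iv} (h : x.2 ≤ y.1) : ¬ Overlap x y := by
  unfold Overlap; omega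

theorem NonOverlapping.subset {T T' : Finset Iv} (h : NonOverlapping T') (hT : T ⊆ T') :
    NonOverlapping T :=
  fun x hx y hy => h x (hT hx) y (hT hy)

theorem nonOverlapping_empty : NonOverlapping ∅ :=
  fun x hx => absurd hx (notMem_empty x)

theorem nonOverlapping_singleton (x : Iv) : NonOverlapping {x} := by
  intro a ha b hb hab
  exact absurd ((mem_singleton.1 ha).trans (mem_singleton.1 hb).symm) hab

theorem card_le_opt {S T : Finset Iv} (hT : T ⊆ S) (h : NonOverlapping T) : T.card ≤ Opt S :=
  le_sup (f := card) (mem_filter.2 ⟨mem_powerset.2 hT, h⟩)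

theorem opt_le {S : Finset Iv} {n : ℕ} (h : ∀ T ⊆ S, NonOverlapping T → T.card ≤ n) :
    Opt S ≤ n :=
  Finset.sup_le fun T hT => by
    rw [mem_filter, mem_powerset] at hT
    exact h T hT.1 hT.2

theorem exists_nonOverlapping_card_eq_opt (S : Finset Iv) :
    ∃ T ⊆ S, NonOverlapping T ∧ T.card = Opt S := by
  obtain ⟨T, hT, hTc⟩ := exists_mem_eq_sup _
    ⟨∅, mem_filter.2 ⟨empty_mem_powerset S, nonOverlapping_empty⟩⟩ card
  rw [mem_filter, mem_powerset] at hT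
  exact ⟨T, hT.1, hT.2, hTc.symm⟩

theorem opt_mono {S S' : Finset Iv} (h : S ⊆ S') : Opt S ≤ Opt S' :=
  opt_le fun _ hT hno => card_le_opt (hT.trans h) hno

theorem NonOverlapping.opt_eq_card {S : Finset Iv} (h : NonOverlapping S) : Opt S = S.card :=
  le_antisymm (opt_le fun _ hT _ => card_le_card hT) (card_le_opt subset_rfl h)

theorem opt_union {S T : Finset Iv} (hST : Disjoint S T)
    (hsep : ∀ x ∈ S, ∀ y ∈ T, ¬ Overlap x y) : Opt (S ∪ T) = Opt S + Opt T := by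
  refine le_antisymm (opt_le fun W hW hWno => ?_) ?_
  · have hsplit : W ⊆ W ∩ S ∪ W ∩ T := fun x hx => by
      rcases mem_union.1 (hW hx) with h | h <;> simp [hx, h]
    calc W.card ≤ (W ∩ S).card + (W ∩ T).card := (card_le_card hsplit).trans (card_union_le _ _)
      _ ≤ Opt S + Opt T :=
        add_le_add (card_le_opt inter_subset_right (hWno.subset inter_subset_left))
          (card_le_opt inter_subset_right (hWno.subset inter_subset_left))
  · obtain ⟨U, hUS, hU, hUc⟩ := exists_nonOverlapping_card_eq_opt S
    obtain ⟨V, hVT, hV, hVc⟩ := exists_nonOverlapping_card_eq_opt T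
    have hUV : NonOverlapping (U ∪ V) := by
      intro x hx y hy hxy
      rcases mem_union.1 hx with hx | hx <;> rcases mem_union.1 hy with hy | hy
      · exact hU x hx y hy hxy
      · exact hsep x (hUS hx) y (hVT hy)
      · exact fun h => hsep y (hUS hy) x (hVT hx) (overlap_comm.1 h)
      · exact hV x hx y hy hxy
    rw [← hUc, ← hVc, ← card_union_of_disjoint (hST.mono hUS hVT)]
    exact card_le_opt (union_subset_union hUS hVT) hUV

theorem opt_insert_of_forall_overlap {x : Iv} {S : Finset Iv} (hS : S.Nonempty)
    (hx : ∀ y ∈ S, Overlap x y) : Opt (insert x S) = Opt S := by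
  refine le_antisymm (opt_le fun W hW hWno => ?_) (opt_mono (subset_insert x S))
  by_cases hxW : x ∈ W
  · have hWx : W ⊆ {x} := fun y hy => by
      by_contra hyx
      have hyx : y ≠ x := by simpa using hyx
      exact hWno x hxW y hy hyx.symm (hx y ((mem_insert.1 (hW hy)).resolve_left hyx))
    obtain ⟨y, hy⟩ := hS
    calc W.card ≤ ({y} : Finset Iv).card := by simpa using card_le_card hWx
      _ ≤ Opt S := card_le_opt (singleton_subset_iff.2 hy) (nonOverlapping_singleton y)
  · refine card_le_opt (fun y hy => ?_) hWno
    exact (mem_insert.1 (hW hy)).resolve_left (ne_of_mem_of_not_mem hy hxW)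

def InBlock (B j : ℕ) (x : Iv) : Prop :=
  (B * j : ℤ) ≤ x.1 ∧ x.1 < x.2 ∧ x.2 ≤ B * j + B

namespace InBlock

variable {B j j' : ℕ} {x y : Iv}

theorem snd_le_fst (hx : InBlock B j x) (hy : InBlock B j' y) (h : j < j') : x.2 ≤ y.1 := by
  have : (B : ℤ) * (j + 1) ≤ B * j' :=
    mul_le_mul_of_nonneg_left (by exact_mod_cast h) (by positivity)
  linarith [hx.2.2, hy.1]

theorem eq (hx : InBlock B j x) (hx' : InBlock B j' x) : j = j' := by
  by_contra h
  rcases lt_or_gt_of_ne h with h | h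
  · linarith [hx.snd_le_fst hx' h, hx.2.1]
  · linarith [hx'.snd_le_fst hx h, hx.2.1]

theorem not_overlap (hx : InBlock B j x) (hy : InBlock B j' y) (h : j ≠ j') : ¬ Overlap x y := by
  rcases lt_or_gt_of_ne h with h | h
  · exact not_overlap_of_snd_le_fst (hx.snd_le_fst hy h)
  · exact fun hov => not_overlap_of_snd_le_fst (hy.snd_le_fst hx h) (overlap_comm.1 hov)

end InBlock

theorem opt_biUnion_of_inBlock {B : ℕ} {s : Finset ℕ} {H : ℕ → Finset Iv}
    (hH : ∀ j ∈ s, ∀ x ∈ H j, InBlock B j x) : Opt (s.biUnion H) = ∑ j ∈ s, Opt (H j) := by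
  induction s using Finset.induction_on with
  | empty => simpa using nonOverlapping_empty.opt_eq_card
  | insert j s hj ih =>
    have hHj := hH j (mem_insert_self j s)
    have hHs : ∀ i ∈ s, ∀ x ∈ H i, InBlock B i x := fun i hi => hH i (mem_insert_of_mem hi)
    rw [biUnion_insert, sum_insert hj, ← ih hHs]
    refine opt_union (disjoint_left.2 fun x hx hx' => ?_) fun x hx y hy => ?_
    · obtain ⟨i, hi, hxi⟩ := mem_biUnion.1 hx'
      exact hj ((hHj x hx).eq (hHs i hi x hxi) ▸ hi)
    · obtain ⟨i, hi, hyi⟩ := mem_biUnion.1 hy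
      exact (hHj x hx).not_overlap (hHs i hi y hyi) (by rintro rfl; exact hj hi)

theorem biUnion_symmDiff_biUnion_of_inBlock {B : ℕ} {s : Finset ℕ} {H H' : ℕ → Finset Iv}
    (hH : ∀ j ∈ s, ∀ x ∈ H j, InBlock B j x) (hH' : ∀ j ∈ s, ∀ x ∈ H' j, InBlock B j x) :
    s.biUnion H ∆ s.biUnion H' = s.biUnion fun j => H j ∆ H' j := by
  ext x
  simp only [mem_symmDiff, mem_biUnion]
  constructor
  · rintro (⟨⟨j, hj, hx⟩, hx'⟩ | ⟨⟨j, hj, hx⟩, hx'⟩)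
    · exact ⟨j, hj, Or.inl ⟨hx, fun h => hx' ⟨j, hj, h⟩⟩⟩
    · exact ⟨j, hj, Or.inr ⟨hx, fun h => hx' ⟨j, hj, h⟩⟩⟩
  · rintro ⟨j, hj, ⟨hx, hx'⟩ | ⟨hx, hx'⟩⟩
    · refine Or.inl ⟨⟨j, hj, hx⟩, ?_⟩
      rintro ⟨i, hi, hxi⟩
      obtain rfl := (hH j hj x hx).eq (hH' i hi x hxi)
      exact hx' hxi
    · refine Or.inr ⟨⟨j, hj, hx⟩, ?_⟩
      rintro ⟨i, hi, hxi⟩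
      obtain rfl := (hH' j hj x hx).eq (hH i hi x hxi)
      exact hx' hxi

def slot (B j t : ℕ) : Iv := (B * j + t, B * j + t + 1)

def span (B j : ℕ) : Iv := (B * j, B * j + B)

section SlotsAndSpans

variable {B j : ℕ}

theorem slot_inBlock {t : ℕ} (ht : t < B) : InBlock B j (slot B j t) := by
  unfold InBlock slot; dsimp only; omega

theorem span_inBlock (hB : 0 < B) : InBlock B j (span B j) := by
  unfold InBlock span; dsimp only; omega

theorem overlap_span_slot {t : ℕ} (ht : t < B) : Overlap (span B j) (slot B j t) := by
  unfold Overlap span slot; dsimp only; omega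

theorem span_ne_slot (hB : 2 ≤ B) (j' t : ℕ) : span B j ≠ slot B j' t := by
  intro h
  simp only [span, slot, Prod.mk.injEq] at h
  omega

theorem slot_injective : Function.Injective (slot B j) := by
  intro t t' h
  simp only [slot, Prod.mk.injEq] at h
  omega

theorem nonOverlapping_image_slot (s : Finset ℕ) : NonOverlapping (s.image (slot B j)) := by
  simp only [NonOverlapping, mem_image]
  rintro _ ⟨t, -, rfl⟩ _ ⟨t', -, rfl⟩ h
  have : t ≠ t' := fun htt => h (htt ▸ rfl)
  unfold Overlap slot; dsimp only; omega

theorem opt_insert_span_image_slot {s : Finset ℕ} (hs : ∀ t ∈ s, t < B) :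
    Opt (insert (span B j) (s.image (slot B j))) = max 1 s.card := by
  rcases s.eq_empty_or_nonempty with rfl | hne
  · simpa using (nonOverlapping_singleton (span B j)).opt_eq_card
  · rw [opt_insert_of_forall_overlap (hne.image _), (nonOverlapping_image_slot s).opt_eq_card,
      card_image_of_injective _ slot_injective, max_eq_right (one_le_card.2 hne)]
    simp only [mem_image]
    rintro _ ⟨t, ht, rfl⟩
    exact overlap_span_slot (hs t ht)

end SlotsAndSpans

theorem Finset.insert_symmDiff_of_notMem {α : Type*} [DecidableEq α] {a : α} {s t : Finset α}
    (ha : a ∉ t) : insert a s ∆ t = insert a (s ∆ t) := by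
  ext x
  by_cases hx : x = a
  · subst hx; simp [mem_symmDiff, ha]
  · simp [mem_symmDiff, hx]

theorem Finset.exists_one_le_sum_eq_card_add {ι : Type*} [DecidableEq ι] (s : Finset ι) {E : ℕ}
    (hE : s = ∅ → E = 0) :
    ∃ k : ι → ℕ, (∀ j ∈ s, 1 ≤ k j) ∧ ∑ j ∈ s, k j = s.card + E ∧ ∀ j, k j ≤ E + 1 := by
  rcases s.eq_empty_or_nonempty with rfl | ⟨j₀, hj₀⟩
  · exact ⟨fun _ => 0, by simp, by simp [hE rfl], fun _ => Nat.zero_le _⟩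
  · refine ⟨fun j => 1 + if j = j₀ then E else 0, fun j _ => Nat.le_add_right 1 _, ?_,
      fun j => by dsimp only; split_ifs <;> omega⟩
    rw [sum_add_distrib, sum_ite_eq' s j₀, if_pos hj₀]
    simp

theorem exists_le_abs_sub_le_of_succ_le_add {f : ℕ → ℝ} {t δ : ℝ} {N : ℕ} (h0 : f 0 ≤ t + δ)
    (hN : t - δ ≤ f N) (hstep : ∀ n, f (n + 1) ≤ f n + δ) : ∃ n ≤ N, |f n - t| ≤ δ := by
  have hex : ∃ n, t - δ ≤ f n := ⟨N, hN⟩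
  have hspec := Nat.find_spec hex
  refine ⟨Nat.find hex, Nat.find_min' hex hN, abs_sub_le_iff.2 ⟨?_, by linarith⟩⟩
  rcases h : Nat.find hex with _ | m
  · linarith
  · have hm : ¬ t - δ ≤ f m := Nat.find_min hex (by omega)
    rw [h] at hspec
    linarith [hstep m]

theorem exists_le_abs_add_div_add_sub_le {ε t x q : ℝ} (hε : 0 < ε) (ht : t ≤ 1) (hx : 0 ≤ x)
    (hq : 0 ≤ q) (hxq : 1 / ε ≤ x + q) (h0 : x / (x + q) ≤ t + ε) {N : ℕ} (hN : q ≤ ε * N) :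
    ∃ n ≤ N, |(x + n) / (x + n + q) - t| ≤ ε := by
  have hD : ∀ n : ℕ, 1 ≤ ε * (x + n + q) := fun n => by
    rw [div_le_iff₀ hε] at hxq
    nlinarith [(Nat.cast_nonneg n : (0 : ℝ) ≤ n)]
  have hDpos : ∀ n : ℕ, 0 < x + n + q := fun n => by
    by_contra h
    nlinarith [hD n]
  refine exists_le_abs_sub_le_of_succ_le_add (f := fun n : ℕ => (x + n) / (x + n + q))
    (by simpa using h0) ?_ fun n => ?_
  · rw [le_div_iff₀ (hDpos N)]
    nlinarith [(Nat.cast_nonneg N : (0 : ℝ) ≤ N)]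
  · -- the step is `q / (D (D + 1)) ≤ 1 / D ≤ ε` for `D = x + n + q ≥ 1 / ε`
    have h1 := hD n
    have h2 := hDpos n
    simp only [Nat.cast_add, Nat.cast_one]
    rw [div_add' _ _ _ h2.ne', div_le_div_iff₀ (by linarith) h2]
    nlinarith [(Nat.cast_nonneg n : (0 : ℝ) ≤ n)]

theorem exists_abs_div_add_sub_le {γ ε : ℝ} (hγ0 : 0 ≤ γ) (hγ1 : γ ≤ 1) (hε : 0 < ε) {S : ℕ}
    (hS : 1 / ε ≤ S) :
    ∃ Y : ℕ, |(S : ℝ) / (S + Y) - γ| ≤ ε := by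
  obtain ⟨Y, -, hY⟩ := exists_le_abs_add_div_add_sub_le (t := 1 - γ) (x := 0) (q := S) hε
    (by linarith) le_rfl (Nat.cast_nonneg S) (by simpa using hS) (by simp; linarith)
    (N := ⌈S / ε⌉₊) (by rw [mul_comm, ← div_le_iff₀ hε]; exact Nat.le_ceil _)
  have hSY : (S : ℝ) + Y ≠ 0 := by
    have : (0 : ℝ) < S + Y := by
      linarith [(by positivity : 0 < 1 / ε), (Nat.cast_nonneg Y : (0 : ℝ) ≤ Y)]
    exact this.ne'
  refine ⟨Y, ?_⟩
  rw [abs_sub_comm, zero_add, add_comm (Y : ℝ)] at hY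
  convert hY using 2
  field_simp
  ring

theorem exists_abs_add_div_add_sub_le {γ ε : ℝ} (hγ1 : γ ≤ 1) (hε : 0 < ε) {S Y a : ℕ}
    (hS : 1 / ε ≤ S) (hY : |(S : ℝ) / (S + Y) - γ| ≤ ε) (ha : a ≤ S) :
    ∃ E ≤ ⌈((S + Y : ℕ) : ℝ) / ε⌉₊, (a = 0 → E = 0) ∧
      |((S : ℝ) + E) / (S + E + (Y + a)) - γ| ≤ ε := by
  rcases Nat.eq_zero_or_pos a with rfl | ha0
  · exact ⟨0, Nat.zero_le _, fun _ => rfl, by simpa using hY⟩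
  have hSpos : (0 : ℝ) < S := lt_of_lt_of_le (by positivity) hS
  have hSY : (0 : ℝ) < S + Y := by linarith [(Nat.cast_nonneg Y : (0 : ℝ) ≤ Y)]
  have h0 : (S : ℝ) / (S + (Y + a)) ≤ γ + ε :=
    (div_le_div_of_nonneg_left (Nat.cast_nonneg S) hSY
      (by linarith [(Nat.cast_nonneg a : (0 : ℝ) ≤ a)])).trans (by linarith [(abs_le.1 hY).2])
  have hN : ((Y + a : ℕ) : ℝ) ≤ ε * ⌈((S + Y : ℕ) : ℝ) / ε⌉₊ := by
    rw [mul_comm, ← div_le_iff₀ hε]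
    exact le_trans (div_le_div_of_nonneg_right (by exact_mod_cast (by omega : Y + a ≤ S + Y)) hε.le)
      (Nat.le_ceil _)
  obtain ⟨E, hE, hEγ⟩ := exists_le_abs_add_div_add_sub_le hε hγ1 (Nat.cast_nonneg S)
    (Nat.cast_nonneg (Y + a)) (by push_cast; linarith [(Nat.cast_nonneg (Y + a) : (0 : ℝ) ≤ _)])
    (by push_cast; exact h0) hN
  exact ⟨E, hE, fun h => absurd h ha0.ne', by push_cast at hEγ; exact hEγ⟩

theorem le_one_sub_div_add_mul {c p q : ℝ} (hpq : 0 < p + q) (hc : c ≤ q) :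
    c ≤ (1 - p / (p + q)) * (p + q) := by
  rwa [sub_mul, one_mul, div_mul_cancel₀ _ hpq.ne', add_sub_cancel_left]

def IvAlg.Feasible (A : IvAlg) : Prop :=
  ∀ (Ihat : Finset Iv) (I : List Iv), I.Nodup → (∀ i ∈ I, i.1 < i.2) →
    ∀ k ∈ accIdx A Ihat I, ∀ k' ∈ accIdx A Ihat I, k ≠ k' →
      ¬ Overlap (I.getD k (0, 1)) (I.getD k' (0, 1))

namespace Adversary

variable (A : IvAlg) (B S Y : ℕ) (k : ℕ → ℕ)

def prediction : Finset Iv := (range (S + Y)).image fun j => slot B j 0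

def opening : List Iv :=
  (List.range (S + Y)).map fun j => if j < S then span B j else slot B j 0

def accepted : Finset ℕ :=
  (range S).filter fun j => A (prediction B S Y) ((opening B S Y).take (j + 1)) = true

def offsets (j : ℕ) : Finset ℕ := if j ∈ accepted A B S Y then range (k j + 1) else ∅

def followUp : List Iv :=
  (List.range S).flatMap fun j =>
    if j ∈ accepted A B S Y then (List.range (k j + 1)).map (slot B j) else []

def requests : List Iv := opening B S Y ++ followUp A B S Y k

def block (j : ℕ) : Finset Iv :=
  if j < S then insert (span B j) ((offsets A B S Y k j).image (slot B j)) else {slot B j 0}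

variable {A B S Y k}

theorem accepted_subset : accepted A B S Y ⊆ range S := filter_subset _ _

theorem mem_followUp {x : Iv} :
    x ∈ followUp A B S Y k ↔ ∃ j ∈ accepted A B S Y, ∃ t < k j + 1, x = slot B j t := by
  simp only [followUp, List.mem_flatMap, List.mem_range]
  constructor
  · rintro ⟨j, -, hx⟩
    split_ifs at hx with hj
    · obtain ⟨t, ht, rfl⟩ := List.mem_map.1 hx
      exact ⟨j, hj, t, List.mem_range.1 ht, rfl⟩
    · simp at hx
  · rintro ⟨j, hj, t, ht, rfl⟩
    refine ⟨j, mem_range.1 (accepted_subset hj), ?_⟩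
    rw [if_pos hj]
    exact List.mem_map_of_mem (List.mem_range.2 ht)

theorem mem_requests {x : Iv} :
    x ∈ requests A B S Y k ↔ ∃ j < S + Y, x ∈ block A B S Y k j := by
  simp only [requests, List.mem_append, mem_followUp, opening, List.mem_map, List.mem_range]
  constructor
  · rintro (⟨j, hj, rfl⟩ | ⟨j, hj, t, ht, rfl⟩)
    · refine ⟨j, hj, ?_⟩
      unfold block
      split_ifs <;> simp
    · have hjS := mem_range.1 (accepted_subset hj)
      refine ⟨j, by omega, ?_⟩
      rw [block, offsets, if_pos hjS, if_pos hj]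
      exact mem_insert_of_mem (mem_image_of_mem _ (mem_range.2 ht))
  · rintro ⟨j, hj, hx⟩
    unfold block offsets at hx
    split_ifs at hx with hjS hjA
    · rcases mem_insert.1 hx with rfl | hx
      · exact Or.inl ⟨j, hj, by simp [hjS]⟩
      · obtain ⟨t, ht, rfl⟩ := mem_image.1 hx
        exact Or.inr ⟨j, hjA, t, mem_range.1 ht, rfl⟩
    · rcases mem_insert.1 hx with rfl | hx
      · exact Or.inl ⟨j, hj, by simp [hjS]⟩
      · simp at hx
    · exact Or.inl ⟨j, hj, by simp [hjS, mem_singleton.1 hx]⟩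

theorem requests_toFinset :
    (requests A B S Y k).toFinset = (range (S + Y)).biUnion (block A B S Y k) := by
  ext x
  simp [mem_requests]

theorem lt_of_mem_offsets (hB : ∀ j, k j + 2 ≤ B) {j t : ℕ} (ht : t ∈ offsets A B S Y k j) :
    t < B := by
  unfold offsets at ht
  split_ifs at ht
  · have := hB j
    simp only [mem_range] at ht
    omega
  · simp at ht

theorem block_inBlock (hB : ∀ j, k j + 2 ≤ B) {j : ℕ} {x : Iv} (hx : x ∈ block A B S Y k j) :
    InBlock B j x := by
  have hB0 : 0 < B := by have := hB 0; omega
  unfold block at hx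
  split_ifs at hx
  · rcases mem_insert.1 hx with rfl | hx
    · exact span_inBlock hB0
    · obtain ⟨t, ht, rfl⟩ := mem_image.1 hx
      exact slot_inBlock (lt_of_mem_offsets hB ht)
  · rw [mem_singleton.1 hx]
    exact slot_inBlock hB0

theorem opt_block (hB : ∀ j, k j + 2 ≤ B) (j : ℕ) :
    Opt (block A B S Y k j) = 1 + if j ∈ accepted A B S Y then k j else 0 := by
  unfold block
  split_ifs with hjS hjA hjA
  · rw [opt_insert_span_image_slot fun t ht => lt_of_mem_offsets hB ht]
    simp [offsets, hjA]
    omega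
  · rw [opt_insert_span_image_slot fun t ht => lt_of_mem_offsets hB ht]
    simp [offsets, hjA]
  · exact absurd (mem_range.1 (accepted_subset hjA)) hjS
  · simpa using (nonOverlapping_singleton (slot B j 0)).opt_eq_card

theorem opt_block_symmDiff (hB : ∀ j, k j + 2 ≤ B) (hk : ∀ j ∈ accepted A B S Y, 1 ≤ k j)
    (j : ℕ) : Opt (block A B S Y k j ∆ {slot B j 0}) =
      if j < S then (if j ∈ accepted A B S Y then k j else 1) else 0 := by
  have hB2 : 2 ≤ B := by have := hB 0; omega
  by_cases hjS : j < S
  · rw [block, if_pos hjS, if_pos hjS,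
      insert_symmDiff_of_notMem (by simpa using span_ne_slot hB2 j 0), ← image_singleton, ← image_symmDiff _ _ slot_injective, opt_insert_span_image_slot]
    · unfold offsets
      split_ifs with hjA
      · rw [symmDiff_of_ge (by simp), card_sdiff_of_subset (by simp), card_range,
          card_singleton, Nat.add_sub_cancel, max_eq_right (hk j hjA)]
      · rw [← bot_eq_empty, bot_symmDiff, card_singleton, max_self]
    · intro t ht
      rcases mem_symmDiff.1 ht with ⟨ht, -⟩ | ⟨ht, -⟩
      · exact lt_of_mem_offsets hB ht
      · rw [mem_singleton.1 ht]
        omega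
  · rw [block, if_neg hjS, if_neg hjS, symmDiff_self]
    simpa using nonOverlapping_empty.opt_eq_card

theorem opt_requests (hB : ∀ j, k j + 2 ≤ B) :
    Opt (requests A B S Y k).toFinset = S + Y + ∑ j ∈ accepted A B S Y, k j := by
  rw [requests_toFinset, opt_biUnion_of_inBlock fun j _ x hx => block_inBlock hB hx,
    sum_congr rfl fun j _ => opt_block hB j, sum_add_distrib, sum_ite_mem,
    inter_eq_right.2 (accepted_subset.trans (range_subset_range.2 (Nat.le_add_right S Y)))]
  simp

theorem opt_requests_symmDiff_prediction (hB : ∀ j, k j + 2 ≤ B)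
    (hk : ∀ j ∈ accepted A B S Y, 1 ≤ k j) :
    Opt ((requests A B S Y k).toFinset ∆ prediction B S Y) + (accepted A B S Y).card =
      S + ∑ j ∈ accepted A B S Y, k j := by
  have hB0 : 0 < B := by have := hB 0; omega
  have hsymm : ∀ j ∈ range (S + Y), ∀ x ∈ block A B S Y k j ∆ {slot B j 0}, InBlock B j x := by
    intro j _ x hx
    rcases mem_symmDiff.1 hx with ⟨hx, -⟩ | ⟨hx, -⟩
    · exact block_inBlock hB hx
    · rw [mem_singleton.1 hx]
      exact slot_inBlock hB0
  have hsplit : ∀ j ∈ range S, ((if j < S then (if j ∈ accepted A B S Y then k j else 1) else 0) +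
      if j ∈ accepted A B S Y then 1 else 0) = 1 + if j ∈ accepted A B S Y then k j else 0 := by
    intro j hj
    rw [if_pos (mem_range.1 hj)]
    split_ifs <;> omega
  have hcard : (accepted A B S Y).card = ∑ j ∈ range S, if j ∈ accepted A B S Y then 1 else 0 := by
    rw [sum_ite_mem, inter_eq_right.2 accepted_subset, card_eq_sum_ones]
  rw [requests_toFinset, prediction, ← biUnion_singleton,
    biUnion_symmDiff_biUnion_of_inBlock (fun j _ x hx => block_inBlock hB hx)
      (fun j _ x hx => by rw [mem_singleton.1 hx]; exact slot_inBlock hB0),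
    opt_biUnion_of_inBlock hsymm, sum_congr rfl fun j _ => opt_block_symmDiff hB hk j,
    sum_range_add, hcard]
  simp only [add_lt_iff_neg_left, not_lt_zero, if_false, sum_const_zero, add_zero]
  rw [← sum_add_distrib, sum_congr rfl hsplit, sum_add_distrib, sum_ite_mem,
    inter_eq_right.2 accepted_subset]
  simp

theorem prediction_valid : ∀ x ∈ prediction B S Y, x.1 < x.2 := by
  intro x hx
  obtain ⟨j, -, rfl⟩ := mem_image.1 hx
  simp [slot]

theorem opening_length : (opening B S Y).length = S + Y := by
  simp [opening]

theorem length_requests :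
    (requests A B S Y k).length = S + Y + (followUp A B S Y k).length := by
  simp [requests, opening_length]

theorem take_requests {j : ℕ} (hj : j < S + Y) :
    (requests A B S Y k).take (j + 1) = (opening B S Y).take (j + 1) :=
  List.take_append_of_le_length (by rw [opening_length]; omega)

theorem getD_requests_of_lt {j : ℕ} (hj : j < S) :
    (requests A B S Y k).getD j (0, 1) = span B j := by
  rw [requests, List.getD_append _ _ _ _ (by rw [opening_length]; omega),
    List.getD_eq_getElem _ _ (by rw [opening_length]; omega)]
  simp [opening, hj]

theorem getD_requests_mem_followUp {p : ℕ} (hp : S + Y ≤ p)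
    (hp' : p < (requests A B S Y k).length) :
    (requests A B S Y k).getD p (0, 1) ∈ followUp A B S Y k := by
  rw [length_requests] at hp'
  rw [requests, List.getD_append_right _ _ _ _ (by rw [opening_length]; omega),
    List.getD_eq_getElem _ _ (by rw [opening_length]; omega)]
  exact List.getElem_mem _

theorem mem_accIdx_of_mem_accepted {j : ℕ} (hj : j ∈ accepted A B S Y) :
    j ∈ accIdx A (prediction B S Y) (requests A B S Y k) := by
  have hjS := mem_range.1 (accepted_subset hj)
  rw [accIdx, mem_filter, mem_range, length_requests, take_requests (by omega)]
  exact ⟨by omega, (mem_filter.1 hj).2⟩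

theorem requests_valid (hB : ∀ j, k j + 2 ≤ B) : ∀ x ∈ requests A B S Y k, x.1 < x.2 := by
  intro x hx
  obtain ⟨j, -, hxj⟩ := mem_requests.1 hx
  exact (block_inBlock hB hxj).2.1

theorem requests_nodup (hB : ∀ j, k j + 2 ≤ B) : (requests A B S Y k).Nodup := by
  have hB2 : 2 ≤ B := by have := hB 0; omega
  have hopen : ∀ j, InBlock B j (if j < S then span B j else slot B j 0) := fun j => by
    split_ifs
    exacts [span_inBlock (by omega), slot_inBlock (by omega)]
  have hpiece : ∀ j, ∀ x ∈ (if j ∈ accepted A B S Y then (List.range (k j + 1)).map (slot B j)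
      else []), InBlock B j x := by
    intro j x hx
    split_ifs at hx
    · obtain ⟨t, ht, rfl⟩ := List.mem_map.1 hx
      have := hB j
      exact slot_inBlock (by rw [List.mem_range] at ht; omega)
    · simp at hx
  rw [requests, List.nodup_append]
  refine ⟨List.nodup_range.map_on fun i _ j _ h => (hopen i).eq (h ▸ hopen j), ?_, ?_⟩
  · rw [followUp, List.nodup_flatMap]
    refine ⟨fun j _ => ?_, List.nodup_range.imp fun hij x hxi hxj =>
      hij ((hpiece _ x hxi).eq (hpiece _ x hxj))⟩
    split_ifs
    exacts [List.nodup_range.map slot_injective, List.nodup_nil]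
  · intro a ha b hb hab
    obtain ⟨j, -, rfl⟩ := List.mem_map.1 ha
    obtain ⟨j', hj', t, ht, rfl⟩ := mem_followUp.1 hb
    have hj'S := mem_range.1 (accepted_subset hj')
    obtain rfl := (hopen j).eq (hab ▸ slot_inBlock (by have := hB j'; omega))
    rw [if_pos hj'S] at hab
    exact span_ne_slot hB2 j t hab

theorem accIdx_requests_subset (hA : A.Feasible) (hB : ∀ j, k j + 2 ≤ B) :
    accIdx A (prediction B S Y) (requests A B S Y k) ⊆ accepted A B S Y ∪ Ico S (S + Y) := by
  intro p hp
  obtain ⟨hplen, hpA⟩ := mem_filter.1 hp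
  rcases lt_or_ge p S with hpS | hpS
  · rw [take_requests (by omega)] at hpA
    exact mem_union_left _ (mem_filter.2 ⟨mem_range.2 hpS, hpA⟩)
  rcases lt_or_ge p (S + Y) with hpY | hpY
  · exact mem_union_right _ (mem_Ico.2 ⟨hpS, hpY⟩)
  -- a follow-up request lies inside an accepted span, so accepting it is infeasible
  obtain ⟨j, hj, t, ht, hx⟩ := mem_followUp.1 (getD_requests_mem_followUp hpY (mem_range.1 hplen))
  have hjS := mem_range.1 (accepted_subset hj)
  refine absurd ?_ (hA _ _ (requests_nodup hB) (requests_valid hB) j (mem_accIdx_of_mem_accepted hj)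
    p hp (by omega))
  rw [getD_requests_of_lt hjS, hx]
  exact overlap_span_slot (by have := hB j; omega)

theorem card_accIdx_requests_le (hA : A.Feasible) (hB : ∀ j, k j + 2 ≤ B) :
    (accIdx A (prediction B S Y) (requests A B S Y k)).card ≤ (accepted A B S Y).card + Y :=
  (card_le_card (accIdx_requests_subset hA hB)).trans ((card_union_le _ _).trans (by simp))

end Adversary

/-- General upper bound for deterministic interval scheduling with
predictions. For every deterministic online algorithm `A` (whose accepted intervals
are always pairwise non-overlapping), every `0 ≤ γ ≤ 1` and `0 < ε < 1`, there are a
prediction `Ihat` and a sequence `Iw` of distinct intervals with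
`ALG(Ihat, Iw) ≤ (1 − γ(Ihat,Iw))·Opt Iw`, `|γ(Ihat,Iw) − γ| ≤ ε` and
`Opt Iw ≥ 1/ε²`, where `γ(Ihat,Iw) = Opt ((Iw \ Ihat) ∪ (Ihat \ Iw)) / Opt Iw`. -/
theorem no_deterministic_better_than_one_sub_gamma
    (A : IvAlg)
    (hfeasible : ∀ (Ihat : Finset Iv) (I : List Iv), I.Nodup →
      (∀ i ∈ I, i.1 < i.2) →
      ∀ k ∈ accIdx A Ihat I, ∀ k' ∈ accIdx A Ihat I, k ≠ k' →
        ¬ Overlap (I.getD k (0, 1)) (I.getD k' (0, 1)))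
    (γ ε : ℝ) (hγ0 : 0 ≤ γ) (hγ1 : γ ≤ 1) (hε0 : 0 < ε) (hε1 : ε < 1) :
    ∃ (Ihat : Finset Iv) (Iw : List Iv), Iw.Nodup ∧
      (∀ i ∈ Iw, i.1 < i.2) ∧ (∀ i ∈ Ihat, i.1 < i.2) ∧
      (((accIdx A Ihat Iw).card : ℝ) ≤
        (1 - (Opt ((Iw.toFinset \ Ihat) ∪ (Ihat \ Iw.toFinset)) : ℝ) /
              (Opt Iw.toFinset : ℝ)) * (Opt Iw.toFinset : ℝ)) ∧
      |((Opt ((Iw.toFinset \ Ihat) ∪ (Ihat \ Iw.toFinset)) : ℝ) /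
          (Opt Iw.toFinset : ℝ)) - γ| ≤ ε ∧
      (1 / ε ^ 2 : ℝ) ≤ (Opt Iw.toFinset : ℝ) := by
  obtain ⟨S, hS2, hS⟩ : ∃ S : ℕ, 1 / ε ^ 2 ≤ S ∧ 1 / ε ≤ S :=
    ⟨⌈1 / ε ^ 2⌉₊, Nat.le_ceil _,
      (one_div_le_one_div_of_le (by positivity) (by nlinarith)).trans (Nat.le_ceil _)⟩
  have hS0 : 0 < S := Nat.cast_pos.1 (lt_of_lt_of_le (by positivity : (0 : ℝ) < 1 / ε) hS)
  obtain ⟨Y, hY⟩ := exists_abs_div_add_sub_le hγ0 hγ1 hε0 hS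
  set B := ⌈((S + Y : ℕ) : ℝ) / ε⌉₊ + 3
  set acc := Adversary.accepted A B S Y
  obtain ⟨E, hEB, hE0, hE⟩ := exists_abs_add_div_add_sub_le hγ1 hε0 hS hY (a := acc.card)
    ((card_le_card Adversary.accepted_subset).trans_eq (card_range S))
  obtain ⟨k, hk1, hksum, hkE⟩ :=
    acc.exists_one_le_sum_eq_card_add (E := E) fun h => hE0 (by rw [h, card_empty])
  have hB : ∀ j, k j + 2 ≤ B := fun j => by have := hkE j; omega
  set I := Adversary.requests A B S Y k
  set Ihat := Adversary.prediction B S Y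
  have hI : Opt I.toFinset = S + E + (Y + acc.card) := by
    rw [Adversary.opt_requests hB, hksum]
    ring
  have hΔ : Opt (I.toFinset ∆ Ihat) + acc.card = S + ∑ j ∈ acc, k j :=
    Adversary.opt_requests_symmDiff_prediction hB hk1
  have hALG : (accIdx A Ihat I).card ≤ acc.card + Y :=
    Adversary.card_accIdx_requests_le hfeasible hB
  refine ⟨Ihat, I, Adversary.requests_nodup hB, Adversary.requests_valid hB,
    Adversary.prediction_valid, ?_⟩
  rw [show I.toFinset \ Ihat ∪ Ihat \ I.toFinset = I.toFinset ∆ Ihat from rfl,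
    show Opt (I.toFinset ∆ Ihat) = S + E by omega, hI]
  push_cast
  exact ⟨le_one_sub_div_add_mul (by exact_mod_cast (by omega : 0 < S + E + (Y + acc.card)))
    (by exact_mod_cast (by omega : _ ≤ Y + acc.card)), hE,
    hS2.trans (by exact_mod_cast (by omega : S ≤ S + E + (Y + acc.card)))⟩
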